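/- arXiv:1810.03176 — 2 statements merged into one kernel-verified Lean document; each statement's English description precedes it below -/
import Mathlib

section
/- Let r, M, d be positive natural numbers, let ε ∈ ℝ with 0 ≤ ε ≤ 1/2, and let q : ({0,1}^r) × ({0,1}^M) → ℝ be any function. Define the binary Fourier transform in the second argument, q̂(x, s) = 2^{-M} · Σ_{y ∈ {0,1}^M} (-1)^{s·y} q(x, y), and assume the spectral gap condition: q̂(x, s) = 0 for every x and every s with 0 < wt(s) < d. Define the noisy function q'(x, y) = Σ_{s ∈ {0,1}^M} (1-2ε)^{wt(s)} (-1)^{s·y} q̂(x, s). Then the noisy function is exponentially close (in d) to its y-independent zero-mode: 2^{-M} · Σ_{y ∈ {0,1}^M} ( Σ_{x ∈ {0,1}^r} |q'(x, y) - q̂(x, 0)| )² ≤ 2^r · (1-2ε)^{2d} · ( 2^{-M} · Σ_{x ∈ {0,1}^r} Σ_{y ∈ {0,1}^M} q(x, y)² ). -/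
/-- The Hamming weight of `s ∈ {0,1}^M`: the number of coordinates equal to `1`. -/
def hammingWt {M : ℕ} (s : Fin M → Fin 2) : ℕ :=
  (Finset.univ.filter fun i => s i = 1).card

/-- Binary Fourier transform in the second argument:
`q̂(x,s) = 2^{-M} Σ_y (-1)^{s·y} q(x,y)`. -/
noncomputable def fourier2 {r M : ℕ} (q : (Fin r → Fin 2) → (Fin M → Fin 2) → ℝ)
    (x : Fin r → Fin 2) (s : Fin M → Fin 2) : ℝ :=
  ((2 : ℝ) ^ M)⁻¹ * ∑ y : Fin M → Fin 2,
    (-1 : ℝ) ^ (∑ i, (s i).val * (y i).val) * q x y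

/-- The noisy function: `q'(x,y) = Σ_s (1-2ε)^{wt s} (-1)^{s·y} q̂(x,s)`. -/
noncomputable def noisyFn {r M : ℕ} (ε : ℝ) (q : (Fin r → Fin 2) → (Fin M → Fin 2) → ℝ)
    (x : Fin r → Fin 2) (y : Fin M → Fin 2) : ℝ :=
  ∑ s : Fin M → Fin 2,
    (1 - 2 * ε) ^ hammingWt s * (-1 : ℝ) ^ (∑ i, (s i).val * (y i).val) * fourier2 q x s

/-! In the Walsh basis `χ_s(y) = (-1)^{s·y}`, which is orthogonal, `q'(x,·) - q̂(x,0)` has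
coefficients `(1-2ε)^{wt s} q̂(x,s)` for `s ≠ 0`, and by the spectral gap these vanish unless
`wt s ≥ d`. Parseval therefore bounds the mean square of `q'(x,·) - q̂(x,0)` by `(1-2ε)^{2d}`
times that of `q(x,·)`, and Cauchy–Schwarz over the `2^r` values of `x` gives the factor `2^r`. -/

open Finset

section Walsh

variable {ι : Type*} [Fintype ι]

def walsh (s y : ι → Fin 2) : ℝ :=
  (-1) ^ (∑ i, (s i).val * (y i).val)

lemma walsh_comm (s y : ι → Fin 2) : walsh s y = walsh y s := by
  simp only [walsh, mul_comm]

lemma walsh_zero_left (y : ι → Fin 2) : walsh 0 y = 1 := by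
  simp [walsh]

lemma walsh_eq_prod (s y : ι → Fin 2) : walsh s y = ∏ i, (-1) ^ ((s i).val * (y i).val) :=
  (prod_pow_eq_pow_sum _ _ _).symm

lemma walsh_add_left (u v y : ι → Fin 2) : walsh (u + v) y = walsh u y * walsh v y := by
  simp only [walsh_eq_prod, ← prod_mul_distrib, Pi.add_apply]
  refine prod_congr rfl fun i _ => ?_
  generalize u i = a, v i = b, y i = c
  fin_cases a <;> fin_cases b <;> fin_cases c <;> simp

variable [DecidableEq ι]

lemma sum_walsh (w : ι → Fin 2) : ∑ y, walsh w y = if w = 0 then 2 ^ Fintype.card ι else 0 := by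
  have factor (a : Fin 2) : ∑ c : Fin 2, (-1 : ℝ) ^ (a.val * c.val) = if a = 0 then 2 else 0 := by
    fin_cases a <;> norm_num [Fin.sum_univ_two]
  simp only [walsh_eq_prod]
  rw [← Fintype.prod_sum (κ := fun _ => Fin 2) fun i c => (-1 : ℝ) ^ ((w i).val * c.val)]
  simp only [factor, prod_ite_zero, mem_univ, true_implies, funext_iff, Pi.zero_apply,
    prod_const, card_univ]

lemma sum_walsh_mul_walsh (u v : ι → Fin 2) :
    ∑ y, walsh u y * walsh v y = if u = v then 2 ^ Fintype.card ι else 0 := by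
  have hadd_eq_zero : u + v = 0 ↔ u = v := by
    simp only [funext_iff, Pi.add_apply, Pi.zero_apply]
    refine forall_congr' fun i => ?_
    generalize u i = a, v i = b
    fin_cases a <;> fin_cases b <;> decide
  simp only [← walsh_add_left, sum_walsh, hadd_eq_zero]

lemma sum_sq_sum_mul_walsh (c : (ι → Fin 2) → ℝ) :
    ∑ y, (∑ s, c s * walsh s y) ^ 2 = 2 ^ Fintype.card ι * ∑ s, c s ^ 2 := by
  calc ∑ y, (∑ s, c s * walsh s y) ^ 2
      = ∑ s, ∑ t, c s * c t * ∑ y, walsh s y * walsh t y := by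
        simp only [sq, sum_mul_sum]
        rw [sum_comm]
        refine sum_congr rfl fun s _ => ?_
        rw [sum_comm]
        simp only [mul_sum]
        exact sum_congr rfl fun t _ => sum_congr rfl fun y _ => by ring
    _ = 2 ^ Fintype.card ι * ∑ s, c s ^ 2 := by
        simp only [sum_walsh_mul_walsh, mul_ite, mul_zero, sum_ite_eq, mem_univ, if_true, mul_sum]
        exact sum_congr rfl fun s _ => by ring

noncomputable def walshCoeff (f : (ι → Fin 2) → ℝ) (s : ι → Fin 2) : ℝ :=
  (2 ^ Fintype.card ι)⁻¹ * ∑ y, walsh s y * f y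

lemma sum_walshCoeff_mul_walsh (f : (ι → Fin 2) → ℝ) (y : ι → Fin 2) :
    ∑ s, walshCoeff f s * walsh s y = f y := by
  calc ∑ s, walshCoeff f s * walsh s y
      = (2 ^ Fintype.card ι)⁻¹ * ∑ z, f z * ∑ s, walsh z s * walsh y s := by
        simp only [walshCoeff, mul_sum, sum_mul]
        rw [sum_comm]
        exact sum_congr rfl fun z _ => sum_congr rfl fun s _ => by
          rw [walsh_comm s z, walsh_comm s y]; ring
    _ = f y := by
        simp only [sum_walsh_mul_walsh, mul_ite, mul_zero, sum_ite_eq', mem_univ, if_true]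
        field_simp

lemma sum_walshCoeff_sq (f : (ι → Fin 2) → ℝ) :
    ∑ s, walshCoeff f s ^ 2 = (2 ^ Fintype.card ι)⁻¹ * ∑ y, f y ^ 2 := by
  conv_rhs => enter [2, 2, y]; rw [← sum_walshCoeff_mul_walsh f y]
  rw [sum_sq_sum_mul_walsh]
  field_simp

end Walsh

lemma fourier2_eq_walshCoeff {r M : ℕ} (q : (Fin r → Fin 2) → (Fin M → Fin 2) → ℝ)
    (x : Fin r → Fin 2) : fourier2 q x = walshCoeff (q x) := by
  funext s
  simp [fourier2, walshCoeff, walsh]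

lemma hammingWt_zero (M : ℕ) : hammingWt (0 : Fin M → Fin 2) = 0 := by
  simp [hammingWt]

lemma hammingWt_pos {M : ℕ} {s : Fin M → Fin 2} (hs : s ≠ 0) : 0 < hammingWt s := by
  obtain ⟨i, hi⟩ := Function.ne_iff.mp hs
  exact card_pos.mpr ⟨i, mem_filter.mpr ⟨mem_univ i, Fin.eq_one_of_ne_zero _ hi⟩⟩

lemma sq_noisyCoeff_le {M d : ℕ} {ρ : ℝ} (hρ : |ρ| ≤ 1) (f : (Fin M → Fin 2) → ℝ)
    (hgap : ∀ s, 0 < hammingWt s → hammingWt s < d → walshCoeff f s = 0)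
    {s : Fin M → Fin 2} (hs : s ≠ 0) :
    (ρ ^ hammingWt s * walshCoeff f s) ^ 2 ≤ ρ ^ (2 * d) * walshCoeff f s ^ 2 := by
  by_cases hlt : hammingWt s < d
  · simp [hgap s (hammingWt_pos hs) hlt]
  · rw [mul_pow, ← pow_mul, mul_comm (hammingWt s), pow_mul, pow_mul]
    have hρ2 : ρ ^ 2 ≤ 1 := (sq_le_one_iff_abs_le_one ρ).mpr hρ
    exact mul_le_mul_of_nonneg_right
      (pow_le_pow_of_le_one (sq_nonneg ρ) hρ2 (not_lt.mp hlt)) (sq_nonneg _)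

lemma sum_sq_noisy_sub_walshCoeff_zero_le {M d : ℕ} {ρ : ℝ} (hρ : |ρ| ≤ 1)
    (f : (Fin M → Fin 2) → ℝ)
    (hgap : ∀ s, 0 < hammingWt s → hammingWt s < d → walshCoeff f s = 0) :
    (2 ^ M)⁻¹ * ∑ y, (∑ s, ρ ^ hammingWt s * walsh s y * walshCoeff f s - walshCoeff f 0) ^ 2
      ≤ ρ ^ (2 * d) * ((2 ^ M)⁻¹ * ∑ y, f y ^ 2) := by
  set c : (Fin M → Fin 2) → ℝ := fun s =>
    ρ ^ hammingWt s * walshCoeff f s - (Pi.single 0 (walshCoeff f 0) : (Fin M → Fin 2) → ℝ) s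
  have hexpand (y : Fin M → Fin 2) :
      ∑ s, ρ ^ hammingWt s * walsh s y * walshCoeff f s - walshCoeff f 0 =
        ∑ s, c s * walsh s y := by
    simp [c, sub_mul, sum_sub_distrib, Pi.single_apply, walsh_zero_left, mul_right_comm]
  have hcoeff (s : Fin M → Fin 2) : c s ^ 2 ≤ ρ ^ (2 * d) * walshCoeff f s ^ 2 := by
    by_cases hs : s = 0
    · subst hs
      have hnonneg : 0 ≤ ρ ^ (2 * d) * walshCoeff f 0 ^ 2 := by
        rw [pow_mul]
        positivity
      simpa [c, hammingWt_zero] using hnonneg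
    · simpa [c, hs] using sq_noisyCoeff_le hρ f hgap hs
  calc (2 ^ M)⁻¹ * ∑ y, (∑ s, ρ ^ hammingWt s * walsh s y * walshCoeff f s - walshCoeff f 0) ^ 2
      = ∑ s, c s ^ 2 := by
        simp only [hexpand, sum_sq_sum_mul_walsh, Fintype.card_fin]
        field_simp
    _ ≤ ∑ s, ρ ^ (2 * d) * walshCoeff f s ^ 2 := sum_le_sum fun s _ => hcoeff s
    _ = ρ ^ (2 * d) * ((2 ^ M)⁻¹ * ∑ y, f y ^ 2) := by
        rw [← mul_sum, sum_walshCoeff_sq, Fintype.card_fin]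

theorem spectral_gap_uniformity_general (r M d : ℕ)
    (ε : ℝ) (hε0 : 0 ≤ ε) (hε : ε ≤ 1 / 2)
    (q : (Fin r → Fin 2) → (Fin M → Fin 2) → ℝ)
    (hgap : ∀ (x : Fin r → Fin 2) (s : Fin M → Fin 2),
      0 < hammingWt s → hammingWt s < d → fourier2 q x s = 0) :
    ((2 : ℝ) ^ M)⁻¹ * ∑ y : Fin M → Fin 2,
        (∑ x : Fin r → Fin 2,
          |noisyFn ε q x y - fourier2 q x (fun _ => 0)|) ^ 2
      ≤ 2 ^ r * (1 - 2 * ε) ^ (2 * d) *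
          (((2 : ℝ) ^ M)⁻¹ * ∑ x : Fin r → Fin 2, ∑ y : Fin M → Fin 2, (q x y) ^ 2) := by
  have hρ : |1 - 2 * ε| ≤ 1 := abs_le.mpr ⟨by linarith, by linarith⟩
  calc ((2 : ℝ) ^ M)⁻¹ * ∑ y, (∑ x, |noisyFn ε q x y - fourier2 q x 0|) ^ 2
      ≤ (2 ^ M)⁻¹ * ∑ y, 2 ^ r * ∑ x, (noisyFn ε q x y - fourier2 q x 0) ^ 2 := by
        gcongr with y
        simpa using sq_sum_le_card_mul_sum_sq (s := univ)
          (f := fun x => |noisyFn ε q x y - fourier2 q x 0|)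
    _ = 2 ^ r * ∑ x, (2 ^ M)⁻¹ * ∑ y, (noisyFn ε q x y - fourier2 q x 0) ^ 2 := by
        simp only [mul_sum]
        rw [sum_comm]
        exact sum_congr rfl fun x _ => sum_congr rfl fun y _ => by ring
    _ ≤ 2 ^ r * ∑ x, (1 - 2 * ε) ^ (2 * d) * ((2 ^ M)⁻¹ * ∑ y, q x y ^ 2) := by
        gcongr 2 ^ r * ∑ x, ?_ with x
        simp only [noisyFn, fourier2_eq_walshCoeff]
        exact sum_sq_noisy_sub_walshCoeff_zero_le hρ (q x)
          (by simpa only [fourier2_eq_walshCoeff] using hgap x)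
    _ = 2 ^ r * (1 - 2 * ε) ^ (2 * d) * ((2 ^ M)⁻¹ * ∑ x, ∑ y, q x y ^ 2) := by
        simp only [mul_sum, mul_assoc]

/-- If the Fourier spectrum has a gap (`q̂(x,s) = 0` whenever `0 < wt s < d`), then the
noisy function is exponentially close (in `d`) to its `y`-independent zero-mode. -/
theorem spectral_gap_uniformity (r M d : ℕ) (hr : 0 < r) (hM : 0 < M) (hd : 0 < d)
    (ε : ℝ) (hε0 : 0 ≤ ε) (hε : ε ≤ 1 / 2)
    (q : (Fin r → Fin 2) → (Fin M → Fin 2) → ℝ)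
    (hgap : ∀ (x : Fin r → Fin 2) (s : Fin M → Fin 2),
      0 < hammingWt s → hammingWt s < d → fourier2 q x s = 0) :
    ((2 : ℝ) ^ M)⁻¹ * ∑ y : Fin M → Fin 2,
        (∑ x : Fin r → Fin 2,
          |noisyFn ε q x y - fourier2 q x (fun _ => 0)|) ^ 2
      ≤ 2 ^ r * (1 - 2 * ε) ^ (2 * d) *
          (((2 : ℝ) ^ M)⁻¹ * ∑ x : Fin r → Fin 2, ∑ y : Fin M → Fin 2, (q x y) ^ 2) :=
  spectral_gap_uniformity_general r M d ε hε0 hε q hgap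
end

section
/- Define F : ℝ³ → ℝ³ by F(ε₁, ε₂, ε₃) = (ε_z, ε_x, ε_y) with ε_z = ε₁(1-ε₂)(1-ε₃) + (1-ε₁)ε₂ε₃, ε_x = ε₂(1-ε₁)(1-ε₃) + (1-ε₂)ε₁ε₃, and ε_y = ε₃(1-ε₁)(1-ε₂) + (1-ε₃)ε₁ε₂. If ε₁ ≠ 1/2, ε₂ ≠ 1/2 and ε₃ ≠ 1/2, then F is a local homeomorphism at (ε₁, ε₂, ε₃): there exist open sets U ∋ (ε₁, ε₂, ε₃) and V ∋ F(ε₁, ε₂, ε₃) such that F restricted to U is a bijection onto V whose inverse is continuous. -/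
/-!
By the inverse function theorem it suffices that the derivative of `pauliRateMap` at `p` is
invertible. Its Jacobian determinant is `(1 - 2ε₁)(1 - 2ε₂)(1 - 2ε₃)`, so away from the
rates `1/2` the Jacobian is injective, hence a linear automorphism of `ℝ³`.
-/

/-- The map sending the rates `(ε₁, ε₂, ε₃)` of three composed single-Pauli error channels
(`Z`-type, then `X`-type, then `Y`-type) to the coefficients `(ε_z, ε_x, ε_y)` of the
resulting mixed Pauli channel. -/
noncomputable def pauliRateMap : ℝ × ℝ × ℝ → ℝ × ℝ × ℝ := fun p =>
  (p.1 * (1 - p.2.1) * (1 - p.2.2) + (1 - p.1) * p.2.1 * p.2.2,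
   p.2.1 * (1 - p.1) * (1 - p.2.2) + (1 - p.2.1) * p.1 * p.2.2,
   p.2.2 * (1 - p.1) * (1 - p.2.1) + (1 - p.2.2) * p.1 * p.2.1)

open Function

theorem HasStrictFDerivAt.exists_open_bijOn_continuousOn_inv
    {𝕜 E F : Type*} [NontriviallyNormedField 𝕜] [NormedAddCommGroup E] [NormedSpace 𝕜 E]
    [CompleteSpace E] [NormedAddCommGroup F] [NormedSpace 𝕜 F]
    {f : E → F} {f' : E ≃L[𝕜] F} {a : E} (hf : HasStrictFDerivAt f (f' : E →L[𝕜] F) a) :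
    ∃ (U : Set E) (V : Set F), IsOpen U ∧ IsOpen V ∧ a ∈ U ∧ f a ∈ V ∧ Set.BijOn f U V ∧
      ∃ g : F → E, ContinuousOn g V ∧ Set.LeftInvOn g f U ∧ Set.RightInvOn g f V := by
  set φ := hf.toOpenPartialHomeomorph f
  have hφ : (φ : E → F) = f := hf.toOpenPartialHomeomorph_coe
  refine ⟨φ.source, φ.target, φ.open_source, φ.open_target,
    hf.mem_toOpenPartialHomeomorph_source, hf.image_mem_toOpenPartialHomeomorph_target,
    hφ ▸ φ.bijOn, φ.symm, φ.continuousOn_symm, hφ ▸ φ.leftInvOn, hφ ▸ φ.rightInvOn⟩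

def pauliJacobian (a b c : ℝ) : (ℝ × ℝ × ℝ) →ₗ[ℝ] ℝ × ℝ × ℝ where
  toFun v :=
    ((1 - b - c) * v.1 + (c - a) * v.2.1 + (b - a) * v.2.2,
     (c - b) * v.1 + (1 - a - c) * v.2.1 + (a - b) * v.2.2,
     (b - c) * v.1 + (a - c) * v.2.1 + (1 - a - b) * v.2.2)
  map_add' u v := by
    simp only [Prod.fst_add, Prod.snd_add, Prod.mk_add_mk]
    congr 1 <;> [ring; congr 1 <;> ring]
  map_smul' r v := by
    simp only [Prod.smul_fst, Prod.smul_snd, Prod.smul_mk, smul_eq_mul, RingHom.id_apply]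
    congr 1 <;> [ring; congr 1 <;> ring]

theorem pauliJacobian_injective {a b c : ℝ} (ha : a ≠ 1 / 2) (hb : b ≠ 1 / 2)
    (hc : c ≠ 1 / 2) : Injective (pauliJacobian a b c) := by
  have ha' : 1 - 2 * a ≠ 0 := by contrapose! ha; linarith
  have hb' : 1 - 2 * b ≠ 0 := by contrapose! hb; linarith
  have hc' : 1 - 2 * c ≠ 0 := by contrapose! hc; linarith
  refine (injective_iff_map_eq_zero _).2 fun ⟨x, y, z⟩ hv => ?_
  simp only [pauliJacobian, LinearMap.coe_mk, AddHom.coe_mk, Prod.mk_eq_zero] at hv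
  obtain ⟨e₁, e₂, e₃⟩ := hv
  have hx : x = 0 := by
    have : 2 * (1 - 2 * b) * (1 - 2 * c) * x = 0 := by
      linear_combination (2 - 2 * b - 2 * c) * e₁ + (2 * a - 2 * c) * e₂ + (2 * a - 2 * b) * e₃
    simpa [hb', hc'] using this
  have hy : (1 - 2 * a) * y = 0 := by linear_combination e₁ + e₂ - (1 - 2 * b) * hx
  have hz : (1 - 2 * a) * z = 0 := by linear_combination e₁ + e₃ - (1 - 2 * c) * hx
  simp_all

theorem hasStrictFDerivAt_pauliRateMap (a b c : ℝ) :
    HasStrictFDerivAt pauliRateMap (LinearMap.toContinuousLinearMap (pauliJacobian a b c))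
      (a, b, c) := by
  have hx : HasStrictFDerivAt (fun q : ℝ × ℝ × ℝ => q.1)
      (ContinuousLinearMap.fst ℝ ℝ (ℝ × ℝ)) (a, b, c) := hasStrictFDerivAt_fst
  have hy : HasStrictFDerivAt (fun q : ℝ × ℝ × ℝ => q.2.1)
      ((ContinuousLinearMap.fst ℝ ℝ ℝ).comp (ContinuousLinearMap.snd ℝ ℝ (ℝ × ℝ))) (a, b, c) :=
    hasStrictFDerivAt_fst.comp _ hasStrictFDerivAt_snd
  have hz : HasStrictFDerivAt (fun q : ℝ × ℝ × ℝ => q.2.2)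
      ((ContinuousLinearMap.snd ℝ ℝ ℝ).comp (ContinuousLinearMap.snd ℝ ℝ (ℝ × ℝ))) (a, b, c) :=
    hasStrictFDerivAt_snd.comp _ hasStrictFDerivAt_snd
  refine HasStrictFDerivAt.congr_fderiv
    ((((hx.mul (hy.const_sub 1)).mul (hz.const_sub 1)).add
        (((hx.const_sub 1).mul hy).mul hz)).prodMk
      ((((hy.mul (hx.const_sub 1)).mul (hz.const_sub 1)).add
          (((hy.const_sub 1).mul hx).mul hz)).prodMk
        (((hz.mul (hx.const_sub 1)).mul (hy.const_sub 1)).add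
          (((hz.const_sub 1).mul hx).mul hy)))) ?_
  ext <;> simp [pauliJacobian] <;> ring

/-- If none of the rates equals `1/2`, then `pauliRateMap` is a local homeomorphism at
`(ε₁, ε₂, ε₃)`: there are open sets `U ∋ (ε₁, ε₂, ε₃)` and `V ∋ F(ε₁, ε₂, ε₃)` such that
`F` restricted to `U` is a bijection onto `V` with a continuous inverse. -/
theorem pauliRateMap_local_homeomorph (p : ℝ × ℝ × ℝ)
    (h₁ : p.1 ≠ 1 / 2) (h₂ : p.2.1 ≠ 1 / 2) (h₃ : p.2.2 ≠ 1 / 2) :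
    ∃ U V : Set (ℝ × ℝ × ℝ), IsOpen U ∧ IsOpen V ∧ p ∈ U ∧ pauliRateMap p ∈ V ∧
      Set.BijOn pauliRateMap U V ∧
      ∃ g : ℝ × ℝ × ℝ → ℝ × ℝ × ℝ, ContinuousOn g V ∧
        Set.LeftInvOn g pauliRateMap U ∧ Set.RightInvOn g pauliRateMap V := by
  obtain ⟨a, b, c⟩ := p
  let J := LinearEquiv.ofInjectiveEndo _ (pauliJacobian_injective h₁ h₂ h₃)
  have hJ : HasStrictFDerivAt pauliRateMap
      (J.toContinuousLinearEquiv : (ℝ × ℝ × ℝ) →L[ℝ] ℝ × ℝ × ℝ) (a, b, c) :=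
    hasStrictFDerivAt_pauliRateMap a b c
  exact hJ.exists_open_bijOn_continuousOn_inv
end
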